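/- (Exact von Mises expansion of the one-step functional.) For any nuisance value η′: E[φ_1(Z; η′)] = θ + Rem_0(η′), where θ = E[q_1(A_1, H_1)] is the true parameter, φ_1(Z; η′) is the pseudo-outcome at t = 0 (with empty augmentation s̄_0), and Rem_0(η′) = Σ_{k=1}^τ Σ_{s_1,…,s_k} E[ D_{0,k}(s̄_k) · (Π_{r=1}^{k−1} g′_r(s_r∣H_r)/g′_r(A_r∣H_r)) · ( g_k(s_k∣H_k)/g_k(A_k∣H_k) − g′_k(s_k∣H_k)/g′_k(A_k∣H_k) ) · ( m′_k(s̄_k, A_k, H_k) − m_k(s̄_k, A_k, H_k) ) ]. -/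

import Mathlib

open MeasureTheory Finset

namespace GLMTP

variable {τ : ℕ}

/-- Augmented natural-treatment history: one treatment value for each time index `< tp`
(0-based; the paper's `s̄_t` corresponds to `tp = t`). -/
abbrev SbarN (𝓐 : Fin τ → Type) (tp : ℕ) : Type :=
  ∀ s : {s : Fin τ // s.val < tp}, 𝓐 s.1

/-- Observed history `H_t = (L_1, A_1, …, A_{t-1}, L_t)`: covariates up to (and including)
time `t` and treatments strictly before time `t`. -/
abbrev Hist (𝓐 𝓛 : Fin τ → Type) (t : Fin τ) : Type :=
  (∀ s : {s : Fin τ // s ≤ t}, 𝓛 s.1) × (∀ s : {s : Fin τ // s < t}, 𝓐 s.1)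

/-- A generalized longitudinal modified treatment policy: at each time `t` it maps the
history of natural treatment values `(a_1, …, a_t)` and the history `h_t` to a treatment. -/
abbrev Policy (𝓐 𝓛 : Fin τ → Type) : Type :=
  ∀ t : Fin τ, SbarN 𝓐 (t.val + 1) → Hist 𝓐 𝓛 t → 𝓐 t

variable {𝓐 𝓛 : Fin τ → Type}

/-- The empty augmented history `s̄_0`. -/
def emptySbar (𝓐 : Fin τ → Type) : SbarN 𝓐 0 :=
  fun s => absurd s.2 (Nat.not_lt_zero _)

def restrictSb {tp tp' : ℕ} (h : tp' ≤ tp) (sb : SbarN 𝓐 tp) : SbarN 𝓐 tp' :=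
  fun s => sb ⟨s.1, lt_of_lt_of_le s.2 h⟩

/-- Append a treatment value at time `t` to an augmented history `s̄_{t-1}`. -/
def snoc {t : Fin τ} (sb : SbarN 𝓐 t.val) (a : 𝓐 t) : SbarN 𝓐 (t.val + 1) :=
  fun s =>
    if h : s.1 = t then cast (congrArg 𝓐 h).symm a
    else sb ⟨s.1, lt_of_le_of_ne (Nat.lt_succ_iff.mp s.2) (fun hv => h (Fin.ext hv))⟩

/-- Extension of an augmented history: treatment values at times `tp ≤ u ≤ k` (0-based),
i.e. the summation variables `s_{t+1}, …, s_k` of the paper. -/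
abbrev Ext (𝓐 : Fin τ → Type) (tp : ℕ) (k : Fin τ) : Type :=
  ∀ s : {s : Fin τ // tp ≤ s.val ∧ s.val ≤ k.val}, 𝓐 s.1

def mergeExt {tp : ℕ} {k : Fin τ} (sb : SbarN 𝓐 tp) (e : Ext 𝓐 tp k) :
    SbarN 𝓐 (k.val + 1) :=
  fun s =>
    if h : s.1.val < tp then sb ⟨s.1, h⟩
    else e ⟨s.1, ⟨not_lt.mp h, Nat.lt_succ_iff.mp s.2⟩⟩

/-- The observed data structure `Z = (L_1, A_1, …, L_τ, A_τ, Y)` with its law `μ`. -/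
structure Model (𝓐 𝓛 : Fin τ → Type) (Ω : Type) [MeasurableSpace Ω] where
  μ : Measure Ω
  L : ∀ t : Fin τ, Ω → 𝓛 t
  A : ∀ t : Fin τ, Ω → 𝓐 t
  Y : Ω → ℝ

variable {Ω : Type} [MeasurableSpace Ω]

/-- The observed history process `ω ↦ H_t(ω)`. -/
def Model.Hproc (M : Model 𝓐 𝓛 Ω) (t : Fin τ) (ω : Ω) : Hist 𝓐 𝓛 t :=
  (fun s => M.L s.1 ω, fun s => M.A s.1 ω)

/-- The event `{H_t = h}`. -/
def Model.histEvent (M : Model 𝓐 𝓛 Ω) (t : Fin τ) (h : Hist 𝓐 𝓛 t) : Set Ω :=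
  {ω | M.Hproc t ω = h}

/-- The event `{A_t = a, H_t = h}`. -/
def Model.condEvent (M : Model 𝓐 𝓛 Ω) (t : Fin τ) (a : 𝓐 t) (h : Hist 𝓐 𝓛 t) : Set Ω :=
  {ω | M.A t ω = a} ∩ M.histEvent t h

/-- Conditional expectation given an event, defined as a ratio. -/
noncomputable def condExpOn (μ : Measure Ω) (S : Set Ω) (X : Ω → ℝ) : ℝ :=
  (∫ ω in S, X ω ∂μ) / (μ S).toReal

/-- The true treatment mechanism `g_t(a ∣ h) = P(A_t = a ∣ H_t = h)`. -/
noncomputable def Model.g (M : Model 𝓐 𝓛 Ω) (t : Fin τ) (a : 𝓐 t) (h : Hist 𝓐 𝓛 t) : ℝ :=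
  (M.μ (M.condEvent t a h)).toReal / (M.μ (M.histEvent t h)).toReal

/-- Full positivity: `P(A_t = a, H_t = h) > 0` for every `t`, `a`, `h`. -/
def Model.Positivity (M : Model 𝓐 𝓛 Ω) : Prop :=
  ∀ (t : Fin τ) (a : 𝓐 t) (h : Hist 𝓐 𝓛 t), 0 < M.μ (M.condEvent t a h)

/-- Measurability of the observed variables. -/
def Model.Meas (M : Model 𝓐 𝓛 Ω) : Prop :=
  (∀ (t : Fin τ) (a : 𝓐 t), MeasurableSet {ω | M.A t ω = a}) ∧
  (∀ (t : Fin τ) (l : 𝓛 t), MeasurableSet {ω | M.L t ω = l}) ∧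
  Measurable M.Y

/-- `q_t` obtained from `m_t`:
`q_t(s̄_{t-1}, a_t, h_t) = m_t((s̄_{t-1},a_t), d_t((s̄_{t-1},a_t), h_t), h_t)`. -/
def qOf (d : Policy 𝓐 𝓛)
    (m : ∀ t : Fin τ, SbarN 𝓐 (t.val + 1) → 𝓐 t → Hist 𝓐 𝓛 t → ℝ)
    (t : Fin τ) (sb : SbarN 𝓐 t.val) (a : 𝓐 t) (h : Hist 𝓐 𝓛 t) : ℝ :=
  m t (snoc sb a) (d t (snoc sb a) h) h

/-- `ω ↦ q_{k+1}(s̄_k, A_{k+1}(ω), H_{k+1}(ω))`, with the convention `q_{τ+1} := Y`. -/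
def Model.qNext (M : Model 𝓐 𝓛 Ω)
    (q : ∀ t : Fin τ, SbarN 𝓐 t.val → 𝓐 t → Hist 𝓐 𝓛 t → ℝ)
    (k : Fin τ) (sb : SbarN 𝓐 (k.val + 1)) (ω : Ω) : ℝ :=
  if h : k.val + 1 < τ then
    q ⟨k.val + 1, h⟩ sb (M.A ⟨k.val + 1, h⟩ ω) (M.Hproc ⟨k.val + 1, h⟩ ω)
  else M.Y ω

/-- `m` is the (true) sequential-regression family for the policy `d`:
`m_t(s̄_t, a_t, h_t) = E[q_{t+1}(s̄_t, A_{t+1}, H_{t+1}) ∣ A_t = a_t, H_t = h_t]`,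
with `q_{τ+1} = Y` (so at `t = τ` this reads `m_τ(a_τ,h_τ) = E[Y ∣ A_τ = a_τ, H_τ = h_τ]`,
extended independently of `s̄_τ`). -/
def IsSeqReg (M : Model 𝓐 𝓛 Ω) (d : Policy 𝓐 𝓛)
    (m : ∀ t : Fin τ, SbarN 𝓐 (t.val + 1) → 𝓐 t → Hist 𝓐 𝓛 t → ℝ) : Prop :=
  ∀ (t : Fin τ) (sb : SbarN 𝓐 (t.val + 1)) (a : 𝓐 t) (h : Hist 𝓐 𝓛 t),
    m t sb a h = condExpOn M.μ (M.condEvent t a h) (M.qNext (qOf d m) t sb)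

/-- The parameter `θ = E[q_1(A_1, H_1)]`. -/
noncomputable def theta (hτ : 0 < τ) (M : Model 𝓐 𝓛 Ω) (d : Policy 𝓐 𝓛)
    (m : ∀ t : Fin τ, SbarN 𝓐 (t.val + 1) → 𝓐 t → Hist 𝓐 𝓛 t → ℝ) : ℝ :=
  ∫ ω, qOf d m ⟨0, hτ⟩ (emptySbar 𝓐) (M.A ⟨0, hτ⟩ ω) (M.Hproc ⟨0, hτ⟩ ω) ∂M.μ

variable [∀ t, DecidableEq (𝓐 t)] [∀ t, Fintype (𝓐 t)]

/-- Indicator `D_{t,k}(s̄_k)`: all treatments at times `tp ≤ u ≤ k` (0-based) follow the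
policy applied to the augmented history. -/
noncomputable def Dind (M : Model 𝓐 𝓛 Ω) (d : Policy 𝓐 𝓛) (tp : ℕ) (k : Fin τ)
    (sb : SbarN 𝓐 (k.val + 1)) (ω : Ω) : ℝ :=
  ∏ u : Fin τ,
    if hu : tp ≤ u.val ∧ u.val ≤ k.val then
      (if M.A u ω = d u (restrictSb (Nat.succ_le_succ hu.2) sb) (M.Hproc u ω) then 1 else 0)
    else 1

/-- Density-ratio weight `∏_{u} g'_u(s_u ∣ H_u)/g'_u(A_u ∣ H_u)` over times `tp ≤ u ≤ k`. -/
noncomputable def weight (M : Model 𝓐 𝓛 Ω) (g' : ∀ t : Fin τ, 𝓐 t → Hist 𝓐 𝓛 t → ℝ)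
    (tp : ℕ) (k : Fin τ) (sb : SbarN 𝓐 (k.val + 1)) (ω : Ω) : ℝ :=
  ∏ u : Fin τ,
    if hu : tp ≤ u.val ∧ u.val ≤ k.val then
      g' u (sb ⟨u, Nat.lt_succ_of_le hu.2⟩) (M.Hproc u ω) / g' u (M.A u ω) (M.Hproc u ω)
    else 1

/-- The pseudo-outcome `φ_{t+1}(s̄_t, Z; η')`; here `tp` is the paper's `t` (so times are
0-based internally: the paper's time `u` is the index `u - 1`). -/
noncomputable def phi (M : Model 𝓐 𝓛 Ω) (d : Policy 𝓐 𝓛)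
    (g' : ∀ t : Fin τ, 𝓐 t → Hist 𝓐 𝓛 t → ℝ)
    (m' : ∀ t : Fin τ, SbarN 𝓐 (t.val + 1) → 𝓐 t → Hist 𝓐 𝓛 t → ℝ)
    (tp : ℕ) (sb : SbarN 𝓐 tp) (ω : Ω) : ℝ :=
  (∑ k : Fin τ,
    if tp ≤ k.val then
      ∑ e : Ext 𝓐 tp k,
        Dind M d tp k (mergeExt sb e) ω * weight M g' tp k (mergeExt sb e) ω *
          (M.qNext (qOf d m') k (mergeExt sb e) ω -
            m' k (mergeExt sb e) (M.A k ω) (M.Hproc k ω))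
    else 0) +
  (if h : tp < τ then
      qOf d m' ⟨tp, h⟩ sb (M.A ⟨tp, h⟩ ω) (M.Hproc ⟨tp, h⟩ ω)
    else M.Y ω)

/-- The remainder `Rem_t(s̄_t, a_t, h_t; η')` of Theorem 2, as a function of the conditioning
event `S` (`S = {A_t = a_t, H_t = h_t}`, or `S = univ` for `t = 0`). -/
noncomputable def rem (M : Model 𝓐 𝓛 Ω) (d : Policy 𝓐 𝓛)
    (g' : ∀ t : Fin τ, 𝓐 t → Hist 𝓐 𝓛 t → ℝ)
    (m' mtrue : ∀ t : Fin τ, SbarN 𝓐 (t.val + 1) → 𝓐 t → Hist 𝓐 𝓛 t → ℝ)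
    (tp : ℕ) (sb : SbarN 𝓐 tp) (S : Set Ω) : ℝ :=
  ∑ k : Fin τ,
    if tp ≤ k.val then
      ∑ e : Ext 𝓐 tp k,
        condExpOn M.μ S (fun ω =>
          Dind M d tp k (mergeExt sb e) ω *
          (∏ r : Fin τ,
            if hr : tp ≤ r.val ∧ r.val < k.val then
              g' r (mergeExt sb e ⟨r, Nat.lt_succ_of_lt hr.2⟩) (M.Hproc r ω) /
                g' r (M.A r ω) (M.Hproc r ω)
            else 1) *
          (M.g k (mergeExt sb e ⟨k, Nat.lt_succ_self _⟩) (M.Hproc k ω) /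
              M.g k (M.A k ω) (M.Hproc k ω) -
            g' k (mergeExt sb e ⟨k, Nat.lt_succ_self _⟩) (M.Hproc k ω) /
              g' k (M.A k ω) (M.Hproc k ω)) *
          (m' k (mergeExt sb e) (M.A k ω) (M.Hproc k ω) -
            mtrue k (mergeExt sb e) (M.A k ω) (M.Hproc k ω)))
    else 0

set_option linter.unusedSectionVars false
/-! ### Auxiliary development for the von Mises expansion -/

section VonMisesAux

lemma condExpOn_univ (μ : Measure Ω) [IsProbabilityMeasure μ] (X : Ω → ℝ) :
    condExpOn μ Set.univ X = ∫ ω, X ω ∂μ := by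
  simp [condExpOn]

lemma mem_histEvent {M : Model 𝓐 𝓛 Ω} {t : Fin τ} {h : Hist 𝓐 𝓛 t} {ω : Ω}
    (hω : ω ∈ M.histEvent t h) :
    (∀ s : {s : Fin τ // s ≤ t}, M.L s.1 ω = h.1 s) ∧
    (∀ s : {s : Fin τ // s < t}, M.A s.1 ω = h.2 s) := by
  have h1 : M.Hproc t ω = h := hω
  exact ⟨fun s => congrFun (congrArg Prod.fst h1) s,
    fun s => congrFun (congrArg Prod.snd h1) s⟩

/-- Restriction of a history to an earlier time. -/
def histRes {t : Fin τ} (h : Hist 𝓐 𝓛 t) {u : Fin τ} (hu : u ≤ t) : Hist 𝓐 𝓛 u :=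
  (fun s => h.1 ⟨s.1, le_trans s.2 hu⟩, fun s => h.2 ⟨s.1, lt_of_lt_of_le s.2 hu⟩)

lemma Hproc_eq_of_mem {M : Model 𝓐 𝓛 Ω} {t : Fin τ} {h : Hist 𝓐 𝓛 t} {ω : Ω}
    (hω : ω ∈ M.histEvent t h) {u : Fin τ} (hu : u ≤ t) :
    M.Hproc u ω = histRes h hu := by
  obtain ⟨hL, hA⟩ := mem_histEvent hω
  refine Prod.ext ?_ ?_
  · funext s; exact hL ⟨s.1, le_trans s.2 hu⟩
  · funext s; exact hA ⟨s.1, lt_of_lt_of_le s.2 hu⟩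

lemma A_eq_of_mem {M : Model 𝓐 𝓛 Ω} {t : Fin τ} {h : Hist 𝓐 𝓛 t} {ω : Ω}
    (hω : ω ∈ M.histEvent t h) {u : Fin τ} (hu : u < t) :
    M.A u ω = h.2 ⟨u, hu⟩ := (mem_histEvent hω).2 ⟨u, hu⟩

lemma mem_condEvent_iff {M : Model 𝓐 𝓛 Ω} {t : Fin τ} {a : 𝓐 t} {h : Hist 𝓐 𝓛 t} {ω : Ω} :
    ω ∈ M.condEvent t a h ↔ M.A t ω = a ∧ M.Hproc t ω = h := Iff.rfl

lemma measurableSet_histEvent {M : Model 𝓐 𝓛 Ω} (hmeas : M.Meas) (t : Fin τ)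
    (h : Hist 𝓐 𝓛 t) : MeasurableSet (M.histEvent t h) := by
  have he : M.histEvent t h =
      (⋂ s : {s : Fin τ // s ≤ t}, {ω | M.L s.1 ω = h.1 s}) ∩
      (⋂ s : {s : Fin τ // s < t}, {ω | M.A s.1 ω = h.2 s}) := by
    ext ω
    simp only [Model.histEvent, Model.Hproc, Set.mem_setOf_eq, Set.mem_inter_iff,
      Set.mem_iInter, Prod.ext_iff, funext_iff]
  rw [he]
  exact (MeasurableSet.iInter fun s => hmeas.2.1 s.1 (h.1 s)).inter
    (MeasurableSet.iInter fun s => hmeas.1 s.1 (h.2 s))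

lemma measurableSet_condEvent {M : Model 𝓐 𝓛 Ω} (hmeas : M.Meas) (t : Fin τ)
    (a : 𝓐 t) (h : Hist 𝓐 𝓛 t) : MeasurableSet (M.condEvent t a h) :=
  (hmeas.1 t a).inter (measurableSet_histEvent hmeas t h)

end VonMisesAux
section VonMisesAux2

variable [∀ t, Fintype (𝓛 t)]

lemma compPair_eq_sum_indicator {M : Model 𝓐 𝓛 Ω} (t : Fin τ) (f : Ω → ℝ) (ω : Ω) :
    f ω = ∑ p : 𝓐 t × Hist 𝓐 𝓛 t, Set.indicator (M.condEvent t p.1 p.2) f ω := by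
  classical
  rw [Finset.sum_eq_single (M.A t ω, M.Hproc t ω)]
  · exact (Set.indicator_of_mem (mem_condEvent_iff.mpr ⟨rfl, rfl⟩) f).symm
  · intro p _ hp
    apply Set.indicator_of_notMem
    intro hmem
    obtain ⟨h1, h2⟩ := mem_condEvent_iff.mp hmem
    exact hp (Prod.ext_iff.mpr ⟨h1.symm, h2.symm⟩)
  · intro hmem; exact absurd (Finset.mem_univ _) hmem

lemma measurable_compPair {M : Model 𝓐 𝓛 Ω} (hmeas : M.Meas)
    (t : Fin τ) (r : 𝓐 t → Hist 𝓐 𝓛 t → ℝ) :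
    Measurable (fun ω => r (M.A t ω) (M.Hproc t ω)) := by
  have hfun : (fun ω => r (M.A t ω) (M.Hproc t ω)) =
      fun ω => ∑ p : 𝓐 t × Hist 𝓐 𝓛 t,
        Set.indicator (M.condEvent t p.1 p.2) (fun _ => r p.1 p.2) ω := by
    funext ω
    have := compPair_eq_sum_indicator (M := M) t
      (fun ω' => r (M.A t ω') (M.Hproc t ω')) ω
    rw [this]
    refine Finset.sum_congr rfl fun p _ => ?_
    by_cases hmem : ω ∈ M.condEvent t p.1 p.2
    · obtain ⟨h1, h2⟩ := mem_condEvent_iff.mp hmem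
      simp [Set.indicator_of_mem hmem, h1, h2]
    · simp [Set.indicator_of_notMem hmem]
  rw [hfun]
  exact Finset.measurable_sum _ fun p _ =>
    measurable_const.indicator (measurableSet_condEvent hmeas t p.1 p.2)

lemma abs_compPair_le {M : Model 𝓐 𝓛 Ω} (t : Fin τ) (r : 𝓐 t → Hist 𝓐 𝓛 t → ℝ) (ω : Ω) :
    |r (M.A t ω) (M.Hproc t ω)| ≤ ∑ p : 𝓐 t × Hist 𝓐 𝓛 t, |r p.1 p.2| := by
  simpa using Finset.single_le_sum (f := fun p : 𝓐 t × Hist 𝓐 𝓛 t => |r p.1 p.2|)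
    (fun p _ => abs_nonneg _) (Finset.mem_univ (M.A t ω, M.Hproc t ω))

lemma integrable_compPair {M : Model 𝓐 𝓛 Ω} [IsFiniteMeasure M.μ] (hmeas : M.Meas)
    (t : Fin τ) (r : 𝓐 t → Hist 𝓐 𝓛 t → ℝ) :
    Integrable (fun ω => r (M.A t ω) (M.Hproc t ω)) M.μ := by
  refine (integrable_const (∑ p : 𝓐 t × Hist 𝓐 𝓛 t, |r p.1 p.2|)).mono'
    (measurable_compPair hmeas t r).aestronglyMeasurable (ae_of_all _ fun ω => ?_)
  simpa [Real.norm_eq_abs] using abs_compPair_le t r ω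

lemma integrable_compPair_mul {M : Model 𝓐 𝓛 Ω} (hmeas : M.Meas)
    (t : Fin τ) (r : 𝓐 t → Hist 𝓐 𝓛 t → ℝ) {X : Ω → ℝ} (hX : Integrable X M.μ) :
    Integrable (fun ω => r (M.A t ω) (M.Hproc t ω) * X ω) M.μ :=
  hX.bdd_mul (c := ∑ p : 𝓐 t × Hist 𝓐 𝓛 t, |r p.1 p.2|)
    (measurable_compPair hmeas t r).aestronglyMeasurable
    (ae_of_all _ fun ω => by simpa [Real.norm_eq_abs] using abs_compPair_le t r ω)

lemma integral_eq_sum_condEvent {M : Model 𝓐 𝓛 Ω} [IsFiniteMeasure M.μ] (hmeas : M.Meas)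
    (t : Fin τ) {f : Ω → ℝ} (hf : Integrable f M.μ) :
    ∫ ω, f ω ∂M.μ = ∑ p : 𝓐 t × Hist 𝓐 𝓛 t, ∫ ω in M.condEvent t p.1 p.2, f ω ∂M.μ := by
  have h1 : ∫ ω, f ω ∂M.μ =
      ∫ ω, ∑ p : 𝓐 t × Hist 𝓐 𝓛 t, Set.indicator (M.condEvent t p.1 p.2) f ω ∂M.μ := by
    congr 1; funext ω; exact compPair_eq_sum_indicator t f ω
  rw [h1, integral_finset_sum _ fun p _ =>
    hf.indicator (measurableSet_condEvent hmeas t p.1 p.2)]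
  exact Finset.sum_congr rfl fun p _ =>
    integral_indicator (measurableSet_condEvent hmeas t p.1 p.2)

lemma integral_compPair_mul_eq {M : Model 𝓐 𝓛 Ω} [IsFiniteMeasure M.μ] (hmeas : M.Meas)
    (t : Fin τ) (c : 𝓐 t → Hist 𝓐 𝓛 t → ℝ) {X : Ω → ℝ} (hX : Integrable X M.μ) :
    ∫ ω, c (M.A t ω) (M.Hproc t ω) * X ω ∂M.μ
      = ∑ p : 𝓐 t × Hist 𝓐 𝓛 t, c p.1 p.2 * ∫ ω in M.condEvent t p.1 p.2, X ω ∂M.μ := by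
  rw [integral_eq_sum_condEvent hmeas t (integrable_compPair_mul hmeas t c hX)]
  refine Finset.sum_congr rfl fun p _ => ?_
  have : ∫ ω in M.condEvent t p.1 p.2, c (M.A t ω) (M.Hproc t ω) * X ω ∂M.μ
      = ∫ ω in M.condEvent t p.1 p.2, c p.1 p.2 * X ω ∂M.μ := by
    refine setIntegral_congr_fun (measurableSet_condEvent hmeas t p.1 p.2) fun ω hω => ?_
    obtain ⟨h1, h2⟩ := mem_condEvent_iff.mp hω
    rw [h1, h2]
  rw [this, integral_const_mul]

lemma integral_compPair_eq {M : Model 𝓐 𝓛 Ω} [IsFiniteMeasure M.μ] (hmeas : M.Meas)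
    (t : Fin τ) (c : 𝓐 t → Hist 𝓐 𝓛 t → ℝ) :
    ∫ ω, c (M.A t ω) (M.Hproc t ω) ∂M.μ
      = ∑ p : 𝓐 t × Hist 𝓐 𝓛 t, c p.1 p.2 * (M.μ (M.condEvent t p.1 p.2)).toReal := by
  have h0 : (fun ω => c (M.A t ω) (M.Hproc t ω))
      = fun ω => c (M.A t ω) (M.Hproc t ω) * (1 : ℝ) := by funext ω; ring
  rw [h0, integral_compPair_mul_eq hmeas t c (integrable_const 1)]
  refine Finset.sum_congr rfl fun p _ => ?_
  simp [measureReal_def]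

lemma setIntegral_eq_condExpOn_mul {μ : Measure Ω} [IsFiniteMeasure μ] {S : Set Ω}
    (hS : μ S ≠ 0) (X : Ω → ℝ) :
    ∫ ω in S, X ω ∂μ = condExpOn μ S X * (μ S).toReal := by
  rw [condExpOn, div_mul_cancel₀]
  exact ENNReal.toReal_ne_zero.mpr ⟨hS, measure_ne_top _ _⟩

end VonMisesAux2
section VonMisesAux3

variable (M : Model 𝓐 𝓛 Ω) (d : Policy 𝓐 𝓛) (g' : ∀ t : Fin τ, 𝓐 t → Hist 𝓐 𝓛 t → ℝ)

/-- Product indicator that the policy is followed at all times `u < n`. -/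
noncomputable def DD (n : ℕ) (sb : SbarN 𝓐 n) (ω : Ω) : ℝ :=
  ∏ u : Fin τ, if hu : u.val < n then
      (if M.A u ω = d u (restrictSb hu sb) (M.Hproc u ω) then 1 else 0) else 1

/-- Density-ratio product over times `u < n`. -/
noncomputable def WW (n : ℕ) (sb : SbarN 𝓐 n) (ω : Ω) : ℝ :=
  ∏ u : Fin τ, if hu : u.val < n then
      g' u (sb ⟨u, hu⟩) (M.Hproc u ω) / g' u (M.A u ω) (M.Hproc u ω) else 1

/-- `q_n(s̄_{n-1}, A_n, H_n)` as a function of `ω`, with `q_τ := Y`. -/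
noncomputable def qG (mm : ∀ t : Fin τ, SbarN 𝓐 (t.val + 1) → 𝓐 t → Hist 𝓐 𝓛 t → ℝ)
    (n : ℕ) (sb : SbarN 𝓐 n) (ω : Ω) : ℝ :=
  if hn : n < τ then qOf d mm ⟨n, hn⟩ sb (M.A ⟨n, hn⟩ ω) (M.Hproc ⟨n, hn⟩ ω) else M.Y ω

lemma qNext_eq_qG (mm : ∀ t : Fin τ, SbarN 𝓐 (t.val + 1) → 𝓐 t → Hist 𝓐 𝓛 t → ℝ)
    (k : Fin τ) (sb : SbarN 𝓐 (k.val + 1)) :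
    M.qNext (qOf d mm) k sb = qG M d mm (k.val + 1) sb := rfl

/-- The value of `DD` on a history event, as a function of the history. -/
noncomputable def cD (k : Fin τ) (sb : SbarN 𝓐 k.val) (h : Hist 𝓐 𝓛 k) : ℝ :=
  ∏ u : Fin τ, if hu : u.val < k.val then
    (if h.2 ⟨u, hu⟩ = d u (restrictSb hu sb) (histRes h (Nat.le_of_lt hu)) then 1 else 0)
  else 1

/-- The value of `WW` on a history event, as a function of the history. -/
noncomputable def cW (k : Fin τ) (sb : SbarN 𝓐 k.val) (h : Hist 𝓐 𝓛 k) : ℝ :=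
  ∏ u : Fin τ, if hu : u.val < k.val then
    g' u (sb ⟨u, hu⟩) (histRes h (Nat.le_of_lt hu)) /
      g' u (h.2 ⟨u, hu⟩) (histRes h (Nat.le_of_lt hu))
  else 1

lemma restrictSb_self {n : ℕ} (h : n ≤ n) (sb : SbarN 𝓐 n) : restrictSb h sb = sb := rfl

lemma DD_eq_of_mem {k : Fin τ} {h : Hist 𝓐 𝓛 k} {ω : Ω} (hω : ω ∈ M.histEvent k h)
    (sb : SbarN 𝓐 k.val) : DD M d k.val sb ω = cD d k sb h := by
  refine Finset.prod_congr rfl fun u _ => ?_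
  by_cases hu : u.val < k.val
  · rw [dif_pos hu, dif_pos hu, A_eq_of_mem hω hu, Hproc_eq_of_mem hω (Nat.le_of_lt hu)]
  · rw [dif_neg hu, dif_neg hu]

lemma WW_eq_of_mem {k : Fin τ} {h : Hist 𝓐 𝓛 k} {ω : Ω} (hω : ω ∈ M.histEvent k h)
    (sb : SbarN 𝓐 k.val) : WW M g' k.val sb ω = cW g' k sb h := by
  refine Finset.prod_congr rfl fun u _ => ?_
  by_cases hu : u.val < k.val
  · rw [dif_pos hu, dif_pos hu, A_eq_of_mem hω hu, Hproc_eq_of_mem hω (Nat.le_of_lt hu)]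
  · rw [dif_neg hu, dif_neg hu]

lemma DD_succ_eq_of_mem {k : Fin τ} {a : 𝓐 k} {h : Hist 𝓐 𝓛 k} {ω : Ω}
    (hω : ω ∈ M.condEvent k a h) (sb : SbarN 𝓐 (k.val + 1)) :
    DD M d (k.val + 1) sb ω =
      cD d k (restrictSb (Nat.le_succ k.val) sb) h * (if a = d k sb h then 1 else 0) := by
  obtain ⟨hA, hH⟩ := mem_condEvent_iff.mp hω
  rw [DD, ← Finset.mul_prod_erase Finset.univ _ (Finset.mem_univ k)]
  have hbody : (if hu : (k : Fin τ).val < k.val + 1 then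
      (if M.A k ω = d k (restrictSb hu sb) (M.Hproc k ω) then (1:ℝ) else 0) else 1)
      = (if a = d k sb h then 1 else 0) := by
    rw [dif_pos (Nat.lt_succ_self _), hA, hH, restrictSb_self]
  rw [hbody, cD, ← Finset.mul_prod_erase Finset.univ _ (Finset.mem_univ k),
    dif_neg (lt_irrefl k.val), one_mul, mul_comm]
  congr 1
  refine Finset.prod_congr rfl fun u hu' => ?_
  have hne : u ≠ k := (Finset.mem_erase.mp hu').1
  by_cases hu : u.val < k.val
  · rw [dif_pos (Nat.lt_succ_of_lt hu), dif_pos hu,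
      A_eq_of_mem hH hu, Hproc_eq_of_mem hH (Nat.le_of_lt hu)]
    exact rfl
  · have hk : ¬ u.val < k.val + 1 := by
      intro hc
      exact hu (lt_of_le_of_ne (Nat.lt_succ_iff.mp hc) (fun hv => hne (Fin.ext hv)))
    rw [dif_neg hk, dif_neg hu]

lemma WW_succ_eq_of_mem {k : Fin τ} {a : 𝓐 k} {h : Hist 𝓐 𝓛 k} {ω : Ω}
    (hω : ω ∈ M.condEvent k a h) (sb : SbarN 𝓐 (k.val + 1)) :
    WW M g' (k.val + 1) sb ω =
      cW g' k (restrictSb (Nat.le_succ k.val) sb) h *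
        (g' k (sb ⟨k, Nat.lt_succ_self _⟩) h / g' k a h) := by
  obtain ⟨hA, hH⟩ := mem_condEvent_iff.mp hω
  rw [WW, ← Finset.mul_prod_erase Finset.univ _ (Finset.mem_univ k)]
  have hbody : (if hu : (k : Fin τ).val < k.val + 1 then
      g' k (sb ⟨k, hu⟩) (M.Hproc k ω) / g' k (M.A k ω) (M.Hproc k ω) else 1)
      = g' k (sb ⟨k, Nat.lt_succ_self _⟩) h / g' k a h := by
    rw [dif_pos (Nat.lt_succ_self _), hA, hH]
  rw [hbody, cW, ← Finset.mul_prod_erase Finset.univ _ (Finset.mem_univ k),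
    dif_neg (lt_irrefl k.val), one_mul, mul_comm]
  congr 1
  refine Finset.prod_congr rfl fun u hu' => ?_
  have hne : u ≠ k := (Finset.mem_erase.mp hu').1
  by_cases hu : u.val < k.val
  · rw [dif_pos (Nat.lt_succ_of_lt hu), dif_pos hu,
      A_eq_of_mem hH hu, Hproc_eq_of_mem hH (Nat.le_of_lt hu)]
    exact rfl
  · have hk : ¬ u.val < k.val + 1 := by
      intro hc
      exact hu (lt_of_le_of_ne (Nat.lt_succ_iff.mp hc) (fun hv => hne (Fin.ext hv)))
    rw [dif_neg hk, dif_neg hu]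

lemma Dind_eq_DD (k : Fin τ) (sb : SbarN 𝓐 (k.val + 1)) :
    Dind M d 0 k sb = DD M d (k.val + 1) sb := by
  funext ω
  refine Finset.prod_congr rfl fun u _ => ?_
  by_cases h : u.val ≤ k.val
  · rw [dif_pos ⟨Nat.zero_le _, h⟩, dif_pos (Nat.lt_succ_of_le h)]
  · rw [dif_neg (by simpa using h), dif_neg (by simpa [Nat.lt_succ_iff] using h)]

lemma weight_eq_WW (k : Fin τ) (sb : SbarN 𝓐 (k.val + 1)) :
    weight M g' 0 k sb = WW M g' (k.val + 1) sb := by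
  funext ω
  refine Finset.prod_congr rfl fun u _ => ?_
  by_cases h : u.val ≤ k.val
  · rw [dif_pos ⟨Nat.zero_le _, h⟩, dif_pos (Nat.lt_succ_of_le h)]
  · rw [dif_neg (by simpa using h), dif_neg (by simpa [Nat.lt_succ_iff] using h)]

end VonMisesAux3
section VonMisesAux4

variable (M : Model 𝓐 𝓛 Ω) (d : Policy 𝓐 𝓛) (g' : ∀ t : Fin τ, 𝓐 t → Hist 𝓐 𝓛 t → ℝ)

/-- Extensions from time `0` are the same as full augmented histories. -/
def extEquiv (k : Fin τ) : Ext 𝓐 0 k ≃ SbarN 𝓐 (k.val + 1) where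
  toFun e := fun s => e ⟨s.1, ⟨Nat.zero_le _, Nat.lt_succ_iff.mp s.2⟩⟩
  invFun sb := fun s => sb ⟨s.1, Nat.lt_succ_of_le s.2.2⟩
  left_inv e := rfl
  right_inv sb := rfl

lemma mergeExt_empty (k : Fin τ) (e : Ext 𝓐 0 k) :
    mergeExt (emptySbar 𝓐) e = extEquiv k e := by
  funext s
  simp only [mergeExt, extEquiv, Equiv.coe_fn_mk]
  rw [dif_neg (Nat.not_lt_zero _)]

lemma restrict_snoc (k : Fin τ) (sb : SbarN 𝓐 k.val) (a : 𝓐 k) :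
    restrictSb (Nat.le_succ k.val) (snoc sb a) = sb := by
  funext s
  have hs : (s.1 : Fin τ) ≠ k := fun he => Nat.ne_of_lt s.2 (congrArg Fin.val he)
  simp only [restrictSb, snoc]
  rw [dif_neg hs]

lemma snoc_last (k : Fin τ) (sb : SbarN 𝓐 k.val) (a : 𝓐 k) :
    snoc sb a ⟨k, Nat.lt_succ_self _⟩ = a := by
  simp [snoc]

lemma snoc_restrict (k : Fin τ) (sb : SbarN 𝓐 (k.val + 1)) :
    snoc (restrictSb (Nat.le_succ k.val) sb) (sb ⟨k, Nat.lt_succ_self _⟩) = sb := by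
  funext s
  obtain ⟨u, hu⟩ := s
  by_cases h : u = k
  · subst h
    simp [snoc]
  · simp only [snoc, restrictSb]
    rw [dif_neg h]

/-- Splitting a length-`k+1` augmented history into its first `k` values and its last. -/
def snocEquiv (k : Fin τ) : SbarN 𝓐 k.val × 𝓐 k ≃ SbarN 𝓐 (k.val + 1) where
  toFun p := snoc p.1 p.2
  invFun sb := (restrictSb (Nat.le_succ k.val) sb, sb ⟨k, Nat.lt_succ_self _⟩)
  left_inv p := by
    obtain ⟨sb, a⟩ := p
    simp only [Prod.mk.injEq]
    exact ⟨restrict_snoc k sb a, snoc_last k sb a⟩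
  right_inv sb := snoc_restrict k sb

/-- The telescoping quantity `N_n`. -/
noncomputable def NN (mm mm' : ∀ t : Fin τ, SbarN 𝓐 (t.val + 1) → 𝓐 t → Hist 𝓐 𝓛 t → ℝ)
    (n : ℕ) : ℝ :=
  ∑ sb : SbarN 𝓐 n, ∫ ω, DD M d n sb ω * WW M g' n sb ω *
    (qG M d mm n sb ω - qG M d mm' n sb ω) ∂M.μ

lemma NN_tau (mm mm' : ∀ t : Fin τ, SbarN 𝓐 (t.val + 1) → 𝓐 t → Hist 𝓐 𝓛 t → ℝ) :
    NN M d g' mm mm' τ = 0 := by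
  unfold NN
  have hq : ∀ sb : SbarN 𝓐 τ, ∀ ω,
      qG M d mm τ sb ω - qG M d mm' τ sb ω = 0 := by
    intro sb ω
    unfold qG
    rw [dif_neg (lt_irrefl τ), dif_neg (lt_irrefl τ), sub_self]
  refine Finset.sum_eq_zero fun sb _ => ?_
  have : ∀ ω, DD M d τ sb ω * WW M g' τ sb ω *
      (qG M d mm τ sb ω - qG M d mm' τ sb ω) = 0 := fun ω => by rw [hq sb ω, mul_zero]
  simp only [this, integral_zero]

instance : Unique (SbarN 𝓐 0) :=
  ⟨⟨emptySbar 𝓐⟩, fun sb => funext fun s => absurd s.2 (Nat.not_lt_zero _)⟩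

lemma NN_zero (hτ : 0 < τ)
    (mm mm' : ∀ t : Fin τ, SbarN 𝓐 (t.val + 1) → 𝓐 t → Hist 𝓐 𝓛 t → ℝ) :
    NN M d g' mm mm' 0 =
      ∫ ω, (qOf d mm ⟨0, hτ⟩ (emptySbar 𝓐) (M.A ⟨0, hτ⟩ ω) (M.Hproc ⟨0, hτ⟩ ω) -
        qOf d mm' ⟨0, hτ⟩ (emptySbar 𝓐) (M.A ⟨0, hτ⟩ ω) (M.Hproc ⟨0, hτ⟩ ω)) ∂M.μ := by
  unfold NN
  rw [Fintype.sum_unique]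
  have hd : ∀ ω, DD M d 0 (default : SbarN 𝓐 0) ω = 1 := by
    intro ω; unfold DD
    refine Finset.prod_eq_one fun u _ => ?_
    rw [dif_neg (Nat.not_lt_zero _)]
  have hw : ∀ ω, WW M g' 0 (default : SbarN 𝓐 0) ω = 1 := by
    intro ω; unfold WW
    refine Finset.prod_eq_one fun u _ => ?_
    rw [dif_neg (Nat.not_lt_zero _)]
  have hde : (default : SbarN 𝓐 0) = emptySbar 𝓐 := Subsingleton.elim _ _
  congr 1
  funext ω
  rw [hd, hw, one_mul, one_mul]
  unfold qG
  rw [dif_pos hτ, dif_pos hτ, hde]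

end VonMisesAux4
section VonMisesAux5

variable [∀ t, Fintype (𝓛 t)]

lemma integrable_qG (M : Model 𝓐 𝓛 Ω) [IsFiniteMeasure M.μ] (hmeas : M.Meas)
    (hbdd : ∃ C, ∀ ω, |M.Y ω| ≤ C) (d : Policy 𝓐 𝓛)
    (mm : ∀ t : Fin τ, SbarN 𝓐 (t.val + 1) → 𝓐 t → Hist 𝓐 𝓛 t → ℝ)
    (n : ℕ) (sb : SbarN 𝓐 n) : Integrable (qG M d mm n sb) M.μ := by
  by_cases hn : n < τ
  · have : qG M d mm n sb = fun ω =>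
        qOf d mm ⟨n, hn⟩ sb (M.A ⟨n, hn⟩ ω) (M.Hproc ⟨n, hn⟩ ω) := by
      funext ω; unfold qG; rw [dif_pos hn]
    rw [this]
    exact integrable_compPair hmeas ⟨n, hn⟩ (fun a h => qOf d mm ⟨n, hn⟩ sb a h)
  · have : qG M d mm n sb = M.Y := by
      funext ω; unfold qG; rw [dif_neg hn]
    rw [this]
    obtain ⟨C, hC⟩ := hbdd
    exact (integrable_const C).mono' hmeas.2.2.aestronglyMeasurable
      (ae_of_all _ fun ω => by simpa [Real.norm_eq_abs] using hC ω)

lemma w_ratio (M : Model 𝓐 𝓛 Ω) [IsFiniteMeasure M.μ] (hpos : M.Positivity)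
    (k : Fin τ) (h : Hist 𝓐 𝓛 k) (s a : 𝓐 k) :
    (M.μ (M.condEvent k a h)).toReal * (M.g k s h / M.g k a h)
      = (M.μ (M.condEvent k s h)).toReal := by
  have hsub : M.condEvent k a h ⊆ M.histEvent k h := Set.inter_subset_right
  have hh0 : (M.μ (M.histEvent k h)).toReal ≠ 0 :=
    (ENNReal.toReal_pos (lt_of_lt_of_le (hpos k a h) (measure_mono hsub)).ne'
      (measure_ne_top _ _)).ne'
  have ha0 : (M.μ (M.condEvent k a h)).toReal ≠ 0 :=
    (ENNReal.toReal_pos (hpos k a h).ne' (measure_ne_top _ _)).ne'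
  unfold Model.g
  field_simp

lemma L1 (M : Model 𝓐 𝓛 Ω) [IsProbabilityMeasure M.μ]
    (hmeas : M.Meas) (hbdd : ∃ C, ∀ ω, |M.Y ω| ≤ C)
    (d : Policy 𝓐 𝓛) (g' : ∀ t : Fin τ, 𝓐 t → Hist 𝓐 𝓛 t → ℝ)
    (m' : ∀ t : Fin τ, SbarN 𝓐 (t.val + 1) → 𝓐 t → Hist 𝓐 𝓛 t → ℝ)
    (k : Fin τ) (sb : SbarN 𝓐 (k.val + 1)) :
    ∫ ω, DD M d (k.val + 1) sb ω * WW M g' (k.val + 1) sb ω *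
        (qG M d m' (k.val + 1) sb ω - m' k sb (M.A k ω) (M.Hproc k ω)) ∂M.μ
      = ∑ p : 𝓐 k × Hist 𝓐 𝓛 k,
        (cD d k (restrictSb (Nat.le_succ k.val) sb) p.2 *
            (if p.1 = d k sb p.2 then 1 else 0) *
          (cW g' k (restrictSb (Nat.le_succ k.val) sb) p.2 *
            (g' k (sb ⟨k, Nat.lt_succ_self _⟩) p.2 / g' k p.1 p.2))) *
        ((∫ ω in M.condEvent k p.1 p.2, qG M d m' (k.val + 1) sb ω ∂M.μ) -
          m' k sb p.1 p.2 * (M.μ (M.condEvent k p.1 p.2)).toReal) := by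
  have hq' := integrable_qG M hmeas hbdd d m' (k.val + 1) sb
  have hX : Integrable
      (fun ω => qG M d m' (k.val + 1) sb ω - m' k sb (M.A k ω) (M.Hproc k ω)) M.μ :=
    hq'.sub (integrable_compPair hmeas k (fun a h => m' k sb a h))
  have hfun : (fun ω => DD M d (k.val + 1) sb ω * WW M g' (k.val + 1) sb ω *
      (qG M d m' (k.val + 1) sb ω - m' k sb (M.A k ω) (M.Hproc k ω)))
      = fun ω => (fun a h => cD d k (restrictSb (Nat.le_succ k.val) sb) h *
          (if a = d k sb h then 1 else 0) *
          (cW g' k (restrictSb (Nat.le_succ k.val) sb) h *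
            (g' k (sb ⟨k, Nat.lt_succ_self _⟩) h / g' k a h))) (M.A k ω) (M.Hproc k ω)
        * (qG M d m' (k.val + 1) sb ω - m' k sb (M.A k ω) (M.Hproc k ω)) := by
    funext ω
    rw [DD_succ_eq_of_mem M d
        (show ω ∈ M.condEvent k (M.A k ω) (M.Hproc k ω) from ⟨rfl, rfl⟩) sb,
      WW_succ_eq_of_mem M g'
        (show ω ∈ M.condEvent k (M.A k ω) (M.Hproc k ω) from ⟨rfl, rfl⟩) sb]
  rw [hfun]
  refine (integral_compPair_mul_eq hmeas k (fun a h =>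
      cD d k (restrictSb (Nat.le_succ k.val) sb) h *
        (if a = d k sb h then 1 else 0) *
        (cW g' k (restrictSb (Nat.le_succ k.val) sb) h *
          (g' k (sb ⟨k, Nat.lt_succ_self _⟩) h / g' k a h))) hX).trans ?_
  refine Finset.sum_congr rfl fun p _ => ?_
  have hE : (∫ ω in M.condEvent k p.1 p.2,
      (qG M d m' (k.val + 1) sb ω - m' k sb (M.A k ω) (M.Hproc k ω)) ∂M.μ)
      = (∫ ω in M.condEvent k p.1 p.2, qG M d m' (k.val + 1) sb ω ∂M.μ) -
        m' k sb p.1 p.2 * (M.μ (M.condEvent k p.1 p.2)).toReal := by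
    have hcongr : ∫ ω in M.condEvent k p.1 p.2,
        (qG M d m' (k.val + 1) sb ω - m' k sb (M.A k ω) (M.Hproc k ω)) ∂M.μ
        = ∫ ω in M.condEvent k p.1 p.2,
        (qG M d m' (k.val + 1) sb ω - m' k sb p.1 p.2) ∂M.μ := by
      refine setIntegral_congr_fun (measurableSet_condEvent hmeas k p.1 p.2) fun ω hω => ?_
      obtain ⟨h1, h2⟩ := mem_condEvent_iff.mp hω
      rw [h1, h2]
    rw [hcongr, integral_sub hq'.integrableOn (integrable_const _).integrableOn,
      setIntegral_const, smul_eq_mul, measureReal_def]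
    ring
  try dsimp only
  rw [hE]

lemma L2 (M : Model 𝓐 𝓛 Ω) [IsProbabilityMeasure M.μ]
    (hmeas : M.Meas) (hbdd : ∃ C, ∀ ω, |M.Y ω| ≤ C) (hpos : M.Positivity)
    (d : Policy 𝓐 𝓛) (g' : ∀ t : Fin τ, 𝓐 t → Hist 𝓐 𝓛 t → ℝ)
    (m m' : ∀ t : Fin τ, SbarN 𝓐 (t.val + 1) → 𝓐 t → Hist 𝓐 𝓛 t → ℝ)
    (hm : IsSeqReg M d m)
    (k : Fin τ) (sb : SbarN 𝓐 (k.val + 1)) :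
    ∫ ω, DD M d (k.val + 1) sb ω * WW M g' (k.val + 1) sb ω *
        (qG M d m (k.val + 1) sb ω - qG M d m' (k.val + 1) sb ω) ∂M.μ
      = ∑ p : 𝓐 k × Hist 𝓐 𝓛 k,
        (cD d k (restrictSb (Nat.le_succ k.val) sb) p.2 *
            (if p.1 = d k sb p.2 then 1 else 0) *
          (cW g' k (restrictSb (Nat.le_succ k.val) sb) p.2 *
            (g' k (sb ⟨k, Nat.lt_succ_self _⟩) p.2 / g' k p.1 p.2))) *
        (m k sb p.1 p.2 * (M.μ (M.condEvent k p.1 p.2)).toReal -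
          ∫ ω in M.condEvent k p.1 p.2, qG M d m' (k.val + 1) sb ω ∂M.μ) := by
  have hqm := integrable_qG M hmeas hbdd d m (k.val + 1) sb
  have hq' := integrable_qG M hmeas hbdd d m' (k.val + 1) sb
  have hX : Integrable
      (fun ω => qG M d m (k.val + 1) sb ω - qG M d m' (k.val + 1) sb ω) M.μ := hqm.sub hq'
  have hfun : (fun ω => DD M d (k.val + 1) sb ω * WW M g' (k.val + 1) sb ω *
      (qG M d m (k.val + 1) sb ω - qG M d m' (k.val + 1) sb ω))
      = fun ω => (fun a h => cD d k (restrictSb (Nat.le_succ k.val) sb) h *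
          (if a = d k sb h then 1 else 0) *
          (cW g' k (restrictSb (Nat.le_succ k.val) sb) h *
            (g' k (sb ⟨k, Nat.lt_succ_self _⟩) h / g' k a h))) (M.A k ω) (M.Hproc k ω)
        * (qG M d m (k.val + 1) sb ω - qG M d m' (k.val + 1) sb ω) := by
    funext ω
    rw [DD_succ_eq_of_mem M d
        (show ω ∈ M.condEvent k (M.A k ω) (M.Hproc k ω) from ⟨rfl, rfl⟩) sb,
      WW_succ_eq_of_mem M g'
        (show ω ∈ M.condEvent k (M.A k ω) (M.Hproc k ω) from ⟨rfl, rfl⟩) sb]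
  rw [hfun]
  refine (integral_compPair_mul_eq hmeas k (fun a h =>
      cD d k (restrictSb (Nat.le_succ k.val) sb) h *
        (if a = d k sb h then 1 else 0) *
        (cW g' k (restrictSb (Nat.le_succ k.val) sb) h *
          (g' k (sb ⟨k, Nat.lt_succ_self _⟩) h / g' k a h))) hX).trans ?_
  refine Finset.sum_congr rfl fun p _ => ?_
  have hq : ∫ ω in M.condEvent k p.1 p.2, qG M d m (k.val + 1) sb ω ∂M.μ
      = m k sb p.1 p.2 * (M.μ (M.condEvent k p.1 p.2)).toReal := by
    rw [setIntegral_eq_condExpOn_mul (hpos k p.1 p.2).ne']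
    congr 1
    rw [← qNext_eq_qG]
    exact (hm k sb p.1 p.2).symm
  have hE : (∫ ω in M.condEvent k p.1 p.2,
      (qG M d m (k.val + 1) sb ω - qG M d m' (k.val + 1) sb ω) ∂M.μ)
      = m k sb p.1 p.2 * (M.μ (M.condEvent k p.1 p.2)).toReal -
        ∫ ω in M.condEvent k p.1 p.2, qG M d m' (k.val + 1) sb ω ∂M.μ := by
    rw [integral_sub hqm.integrableOn hq'.integrableOn, hq]
  try dsimp only
  rw [hE]

lemma L3 (M : Model 𝓐 𝓛 Ω) [IsProbabilityMeasure M.μ]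
    (hmeas : M.Meas)
    (d : Policy 𝓐 𝓛) (g' : ∀ t : Fin τ, 𝓐 t → Hist 𝓐 𝓛 t → ℝ)
    (m m' : ∀ t : Fin τ, SbarN 𝓐 (t.val + 1) → 𝓐 t → Hist 𝓐 𝓛 t → ℝ)
    (k : Fin τ) (sb : SbarN 𝓐 (k.val + 1)) :
    ∫ ω, DD M d (k.val + 1) sb ω *
        WW M g' k.val (restrictSb (Nat.le_succ k.val) sb) ω *
        (M.g k (sb ⟨k, Nat.lt_succ_self _⟩) (M.Hproc k ω) / M.g k (M.A k ω) (M.Hproc k ω) -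
          g' k (sb ⟨k, Nat.lt_succ_self _⟩) (M.Hproc k ω) / g' k (M.A k ω) (M.Hproc k ω)) *
        (m' k sb (M.A k ω) (M.Hproc k ω) - m k sb (M.A k ω) (M.Hproc k ω)) ∂M.μ
      = ∑ p : 𝓐 k × Hist 𝓐 𝓛 k,
        (cD d k (restrictSb (Nat.le_succ k.val) sb) p.2 *
            (if p.1 = d k sb p.2 then 1 else 0) *
          cW g' k (restrictSb (Nat.le_succ k.val) sb) p.2 *
          (M.g k (sb ⟨k, Nat.lt_succ_self _⟩) p.2 / M.g k p.1 p.2 -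
            g' k (sb ⟨k, Nat.lt_succ_self _⟩) p.2 / g' k p.1 p.2) *
          (m' k sb p.1 p.2 - m k sb p.1 p.2)) *
        (M.μ (M.condEvent k p.1 p.2)).toReal := by
  have hfun : (fun ω => DD M d (k.val + 1) sb ω *
      WW M g' k.val (restrictSb (Nat.le_succ k.val) sb) ω *
      (M.g k (sb ⟨k, Nat.lt_succ_self _⟩) (M.Hproc k ω) / M.g k (M.A k ω) (M.Hproc k ω) -
        g' k (sb ⟨k, Nat.lt_succ_self _⟩) (M.Hproc k ω) / g' k (M.A k ω) (M.Hproc k ω)) *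
      (m' k sb (M.A k ω) (M.Hproc k ω) - m k sb (M.A k ω) (M.Hproc k ω)))
      = fun ω => (fun a h => cD d k (restrictSb (Nat.le_succ k.val) sb) h *
          (if a = d k sb h then 1 else 0) *
          cW g' k (restrictSb (Nat.le_succ k.val) sb) h *
          (M.g k (sb ⟨k, Nat.lt_succ_self _⟩) h / M.g k a h -
            g' k (sb ⟨k, Nat.lt_succ_self _⟩) h / g' k a h) *
          (m' k sb a h - m k sb a h)) (M.A k ω) (M.Hproc k ω) := by
    funext ω
    rw [DD_succ_eq_of_mem M d
        (show ω ∈ M.condEvent k (M.A k ω) (M.Hproc k ω) from ⟨rfl, rfl⟩) sb,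
      WW_eq_of_mem M g' (show ω ∈ M.histEvent k (M.Hproc k ω) from rfl)
        (restrictSb (Nat.le_succ k.val) sb)]
  rw [hfun]
  exact integral_compPair_eq hmeas k (fun a h =>
    cD d k (restrictSb (Nat.le_succ k.val) sb) h *
      (if a = d k sb h then 1 else 0) *
      cW g' k (restrictSb (Nat.le_succ k.val) sb) h *
      (M.g k (sb ⟨k, Nat.lt_succ_self _⟩) h / M.g k a h -
        g' k (sb ⟨k, Nat.lt_succ_self _⟩) h / g' k a h) *
      (m' k sb a h - m k sb a h))

lemma L4 (M : Model 𝓐 𝓛 Ω) [IsProbabilityMeasure M.μ]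
    (hmeas : M.Meas)
    (d : Policy 𝓐 𝓛) (g' : ∀ t : Fin τ, 𝓐 t → Hist 𝓐 𝓛 t → ℝ)
    (m m' : ∀ t : Fin τ, SbarN 𝓐 (t.val + 1) → 𝓐 t → Hist 𝓐 𝓛 t → ℝ)
    (k : Fin τ) :
    NN M d g' m m' k.val
      = ∑ sb₀ : SbarN 𝓐 k.val, ∑ p : 𝓐 k × Hist 𝓐 𝓛 k,
        (cD d k sb₀ p.2 * cW g' k sb₀ p.2 *
          (qOf d m k sb₀ p.1 p.2 - qOf d m' k sb₀ p.1 p.2)) *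
        (M.μ (M.condEvent k p.1 p.2)).toReal := by
  unfold NN
  refine Finset.sum_congr rfl fun sb₀ _ => ?_
  have hfun : (fun ω => DD M d k.val sb₀ ω * WW M g' k.val sb₀ ω *
      (qG M d m k.val sb₀ ω - qG M d m' k.val sb₀ ω))
      = fun ω => (fun a h => cD d k sb₀ h * cW g' k sb₀ h *
          (qOf d m k sb₀ a h - qOf d m' k sb₀ a h)) (M.A k ω) (M.Hproc k ω) := by
    funext ω
    rw [DD_eq_of_mem M d (show ω ∈ M.histEvent k (M.Hproc k ω) from rfl) sb₀,
      WW_eq_of_mem M g' (show ω ∈ M.histEvent k (M.Hproc k ω) from rfl) sb₀]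
    unfold qG
    rw [dif_pos k.isLt, dif_pos k.isLt]
  rw [hfun]
  exact integral_compPair_eq hmeas k (fun a h => cD d k sb₀ h * cW g' k sb₀ h *
    (qOf d m k sb₀ a h - qOf d m' k sb₀ a h))

end VonMisesAux5
section VonMisesAux6

variable [∀ t, Fintype (𝓛 t)]

lemma L5 (M : Model 𝓐 𝓛 Ω) [IsProbabilityMeasure M.μ] (hpos : M.Positivity)
    (d : Policy 𝓐 𝓛) (g' : ∀ t : Fin τ, 𝓐 t → Hist 𝓐 𝓛 t → ℝ)
    (m m' : ∀ t : Fin τ, SbarN 𝓐 (t.val + 1) → 𝓐 t → Hist 𝓐 𝓛 t → ℝ)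
    (k : Fin τ) :
    ∑ sb : SbarN 𝓐 (k.val + 1), ∑ p : 𝓐 k × Hist 𝓐 𝓛 k,
      (cD d k (restrictSb (Nat.le_succ k.val) sb) p.2 *
          (if p.1 = d k sb p.2 then 1 else 0) *
        (cW g' k (restrictSb (Nat.le_succ k.val) sb) p.2 *
          (g' k (sb ⟨k, Nat.lt_succ_self _⟩) p.2 / g' k p.1 p.2))) *
      ((m k sb p.1 p.2 - m' k sb p.1 p.2) * (M.μ (M.condEvent k p.1 p.2)).toReal)
    = (∑ sb : SbarN 𝓐 (k.val + 1), ∑ p : 𝓐 k × Hist 𝓐 𝓛 k,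
        (cD d k (restrictSb (Nat.le_succ k.val) sb) p.2 *
            (if p.1 = d k sb p.2 then 1 else 0) *
          cW g' k (restrictSb (Nat.le_succ k.val) sb) p.2 *
          (M.g k (sb ⟨k, Nat.lt_succ_self _⟩) p.2 / M.g k p.1 p.2 -
            g' k (sb ⟨k, Nat.lt_succ_self _⟩) p.2 / g' k p.1 p.2) *
          (m' k sb p.1 p.2 - m k sb p.1 p.2)) *
        (M.μ (M.condEvent k p.1 p.2)).toReal)
      + ∑ sb₀ : SbarN 𝓐 k.val, ∑ p : 𝓐 k × Hist 𝓐 𝓛 k,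
        (cD d k sb₀ p.2 * cW g' k sb₀ p.2 *
          (qOf d m k sb₀ p.1 p.2 - qOf d m' k sb₀ p.1 p.2)) *
        (M.μ (M.condEvent k p.1 p.2)).toReal := by
  rw [← sub_eq_iff_eq_add']
  rw [← Finset.sum_sub_distrib]
  have hpt : ∀ (sb : SbarN 𝓐 (k.val + 1)),
      (∑ p : 𝓐 k × Hist 𝓐 𝓛 k,
        (cD d k (restrictSb (Nat.le_succ k.val) sb) p.2 *
            (if p.1 = d k sb p.2 then 1 else 0) *
          (cW g' k (restrictSb (Nat.le_succ k.val) sb) p.2 *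
            (g' k (sb ⟨k, Nat.lt_succ_self _⟩) p.2 / g' k p.1 p.2))) *
        ((m k sb p.1 p.2 - m' k sb p.1 p.2) * (M.μ (M.condEvent k p.1 p.2)).toReal))
      - (∑ p : 𝓐 k × Hist 𝓐 𝓛 k,
        (cD d k (restrictSb (Nat.le_succ k.val) sb) p.2 *
            (if p.1 = d k sb p.2 then 1 else 0) *
          cW g' k (restrictSb (Nat.le_succ k.val) sb) p.2 *
          (M.g k (sb ⟨k, Nat.lt_succ_self _⟩) p.2 / M.g k p.1 p.2 -
            g' k (sb ⟨k, Nat.lt_succ_self _⟩) p.2 / g' k p.1 p.2) *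
          (m' k sb p.1 p.2 - m k sb p.1 p.2)) *
        (M.μ (M.condEvent k p.1 p.2)).toReal)
      = ∑ p : 𝓐 k × Hist 𝓐 𝓛 k,
        cD d k (restrictSb (Nat.le_succ k.val) sb) p.2 *
          (if p.1 = d k sb p.2 then 1 else 0) *
          cW g' k (restrictSb (Nat.le_succ k.val) sb) p.2 *
          (M.g k (sb ⟨k, Nat.lt_succ_self _⟩) p.2 / M.g k p.1 p.2) *
          (m k sb p.1 p.2 - m' k sb p.1 p.2) *
          (M.μ (M.condEvent k p.1 p.2)).toReal := by
    intro sb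
    rw [← Finset.sum_sub_distrib]
    refine Finset.sum_congr rfl fun p _ => ?_
    ring
  have hsum : (∑ sb : SbarN 𝓐 (k.val + 1), ∑ p : 𝓐 k × Hist 𝓐 𝓛 k,
        cD d k (restrictSb (Nat.le_succ k.val) sb) p.2 *
          (if p.1 = d k sb p.2 then 1 else 0) *
          cW g' k (restrictSb (Nat.le_succ k.val) sb) p.2 *
          (M.g k (sb ⟨k, Nat.lt_succ_self _⟩) p.2 / M.g k p.1 p.2) *
          (m k sb p.1 p.2 - m' k sb p.1 p.2) *
          (M.μ (M.condEvent k p.1 p.2)).toReal)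
      = ∑ sb₀ : SbarN 𝓐 k.val, ∑ p : 𝓐 k × Hist 𝓐 𝓛 k,
        (cD d k sb₀ p.2 * cW g' k sb₀ p.2 *
          (qOf d m k sb₀ p.1 p.2 - qOf d m' k sb₀ p.1 p.2)) *
        (M.μ (M.condEvent k p.1 p.2)).toReal := by
    rw [← Fintype.sum_equiv (snocEquiv k)
      (fun pr => ∑ p : 𝓐 k × Hist 𝓐 𝓛 k,
        cD d k (restrictSb (Nat.le_succ k.val) (snocEquiv k pr)) p.2 *
          (if p.1 = d k (snocEquiv k pr) p.2 then 1 else 0) *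
          cW g' k (restrictSb (Nat.le_succ k.val) (snocEquiv k pr)) p.2 *
          (M.g k ((snocEquiv k pr) ⟨k, Nat.lt_succ_self _⟩) p.2 / M.g k p.1 p.2) *
          (m k (snocEquiv k pr) p.1 p.2 - m' k (snocEquiv k pr) p.1 p.2) *
          (M.μ (M.condEvent k p.1 p.2)).toReal)
      _ (fun pr => rfl)]
    rw [Fintype.sum_prod_type]
    refine Finset.sum_congr rfl fun sb₀ _ => ?_
    -- now: ∑ s : 𝓐 k, ∑ p, ... = ∑ p, ...
    have hc : ∀ s : 𝓐 k, ∀ p : 𝓐 k × Hist 𝓐 𝓛 k,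
        cD d k (restrictSb (Nat.le_succ k.val) (snocEquiv k (sb₀, s))) p.2 *
          (if p.1 = d k (snocEquiv k (sb₀, s)) p.2 then 1 else 0) *
          cW g' k (restrictSb (Nat.le_succ k.val) (snocEquiv k (sb₀, s))) p.2 *
          (M.g k ((snocEquiv k (sb₀, s)) ⟨k, Nat.lt_succ_self _⟩) p.2 / M.g k p.1 p.2) *
          (m k (snocEquiv k (sb₀, s)) p.1 p.2 - m' k (snocEquiv k (sb₀, s)) p.1 p.2) *
          (M.μ (M.condEvent k p.1 p.2)).toReal
        = cD d k sb₀ p.2 *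
          (if p.1 = d k (snoc sb₀ s) p.2 then 1 else 0) *
          cW g' k sb₀ p.2 *
          (M.g k s p.2 / M.g k p.1 p.2) *
          (m k (snoc sb₀ s) p.1 p.2 - m' k (snoc sb₀ s) p.1 p.2) *
          (M.μ (M.condEvent k p.1 p.2)).toReal := by
      intro s p
      have h1 : restrictSb (Nat.le_succ k.val) (snocEquiv k (sb₀, s)) = sb₀ :=
        restrict_snoc k sb₀ s
      have h2 : (snocEquiv k (sb₀, s)) ⟨k, Nat.lt_succ_self _⟩ = s := snoc_last k sb₀ s
      have h3 : (snocEquiv k (sb₀, s) : SbarN 𝓐 (k.val + 1)) = snoc sb₀ s := rfl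
      rw [h3] at h1 h2 ⊢
      rw [h1, h2]
    calc (∑ s : 𝓐 k, ∑ p : 𝓐 k × Hist 𝓐 𝓛 k,
        cD d k (restrictSb (Nat.le_succ k.val) (snocEquiv k (sb₀, s))) p.2 *
          (if p.1 = d k (snocEquiv k (sb₀, s)) p.2 then 1 else 0) *
          cW g' k (restrictSb (Nat.le_succ k.val) (snocEquiv k (sb₀, s))) p.2 *
          (M.g k ((snocEquiv k (sb₀, s)) ⟨k, Nat.lt_succ_self _⟩) p.2 / M.g k p.1 p.2) *
          (m k (snocEquiv k (sb₀, s)) p.1 p.2 - m' k (snocEquiv k (sb₀, s)) p.1 p.2) *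
          (M.μ (M.condEvent k p.1 p.2)).toReal)
        = ∑ s : 𝓐 k, ∑ h : Hist 𝓐 𝓛 k, ∑ a : 𝓐 k,
          cD d k sb₀ h *
          (if a = d k (snoc sb₀ s) h then 1 else 0) *
          cW g' k sb₀ h *
          (M.g k s h / M.g k a h) *
          (m k (snoc sb₀ s) a h - m' k (snoc sb₀ s) a h) *
          (M.μ (M.condEvent k a h)).toReal := by
          refine Finset.sum_congr rfl fun s _ => ?_
          rw [Finset.sum_congr rfl fun p _ => hc s p, Fintype.sum_prod_type,
            Finset.sum_comm]
      _ = ∑ s : 𝓐 k, ∑ h : Hist 𝓐 𝓛 k,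
          cD d k sb₀ h * cW g' k sb₀ h *
          (qOf d m k sb₀ s h - qOf d m' k sb₀ s h) *
          (M.μ (M.condEvent k s h)).toReal := by
          refine Finset.sum_congr rfl fun s _ => Finset.sum_congr rfl fun h _ => ?_
          have hstep : ∀ a : 𝓐 k,
              cD d k sb₀ h * (if a = d k (snoc sb₀ s) h then 1 else 0) *
                cW g' k sb₀ h * (M.g k s h / M.g k a h) *
                (m k (snoc sb₀ s) a h - m' k (snoc sb₀ s) a h) *
                (M.μ (M.condEvent k a h)).toReal
              = if a = d k (snoc sb₀ s) h then
                  cD d k sb₀ h * cW g' k sb₀ h *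
                  (m k (snoc sb₀ s) a h - m' k (snoc sb₀ s) a h) *
                  ((M.μ (M.condEvent k a h)).toReal * (M.g k s h / M.g k a h))
                else 0 := by
            intro a
            split_ifs with hif
            · ring
            · ring
          rw [Finset.sum_congr rfl fun a _ => hstep a, Finset.sum_ite_eq' Finset.univ]
          simp only [Finset.mem_univ, if_true]
          rw [w_ratio M hpos k h s (d k (snoc sb₀ s) h)]
          rfl
      _ = ∑ p : 𝓐 k × Hist 𝓐 𝓛 k,
          (cD d k sb₀ p.2 * cW g' k sb₀ p.2 *
            (qOf d m k sb₀ p.1 p.2 - qOf d m' k sb₀ p.1 p.2)) *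
          (M.μ (M.condEvent k p.1 p.2)).toReal := by
          rw [Fintype.sum_prod_type]
  rw [Finset.sum_congr rfl fun sb _ => hpt sb, hsum]

end VonMisesAux6
section VonMisesAux7

variable [∀ t, Fintype (𝓛 t)]

lemma integrable_Tterm (M : Model 𝓐 𝓛 Ω) [IsProbabilityMeasure M.μ]
    (hmeas : M.Meas) (hbdd : ∃ C, ∀ ω, |M.Y ω| ≤ C)
    (d : Policy 𝓐 𝓛) (g' : ∀ t : Fin τ, 𝓐 t → Hist 𝓐 𝓛 t → ℝ)
    (m' : ∀ t : Fin τ, SbarN 𝓐 (t.val + 1) → 𝓐 t → Hist 𝓐 𝓛 t → ℝ)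
    (k : Fin τ) (sb : SbarN 𝓐 (k.val + 1)) :
    Integrable (fun ω => DD M d (k.val + 1) sb ω * WW M g' (k.val + 1) sb ω *
        (qG M d m' (k.val + 1) sb ω - m' k sb (M.A k ω) (M.Hproc k ω))) M.μ := by
  have hX : Integrable
      (fun ω => qG M d m' (k.val + 1) sb ω - m' k sb (M.A k ω) (M.Hproc k ω)) M.μ :=
    (integrable_qG M hmeas hbdd d m' (k.val + 1) sb).sub
      (integrable_compPair hmeas k (fun a h => m' k sb a h))
  have hfun : (fun ω => DD M d (k.val + 1) sb ω * WW M g' (k.val + 1) sb ω *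
      (qG M d m' (k.val + 1) sb ω - m' k sb (M.A k ω) (M.Hproc k ω)))
      = fun ω => (fun a h => cD d k (restrictSb (Nat.le_succ k.val) sb) h *
          (if a = d k sb h then 1 else 0) *
          (cW g' k (restrictSb (Nat.le_succ k.val) sb) h *
            (g' k (sb ⟨k, Nat.lt_succ_self _⟩) h / g' k a h))) (M.A k ω) (M.Hproc k ω)
        * (qG M d m' (k.val + 1) sb ω - m' k sb (M.A k ω) (M.Hproc k ω)) := by
    funext ω
    rw [DD_succ_eq_of_mem M d
        (show ω ∈ M.condEvent k (M.A k ω) (M.Hproc k ω) from ⟨rfl, rfl⟩) sb,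
      WW_succ_eq_of_mem M g'
        (show ω ∈ M.condEvent k (M.A k ω) (M.Hproc k ω) from ⟨rfl, rfl⟩) sb]
  rw [hfun]
  exact integrable_compPair_mul hmeas k (fun a h =>
    cD d k (restrictSb (Nat.le_succ k.val) sb) h *
      (if a = d k sb h then 1 else 0) *
      (cW g' k (restrictSb (Nat.le_succ k.val) sb) h *
        (g' k (sb ⟨k, Nat.lt_succ_self _⟩) h / g' k a h))) hX

lemma step_lemma (M : Model 𝓐 𝓛 Ω) [IsProbabilityMeasure M.μ]
    (hmeas : M.Meas) (hbdd : ∃ C, ∀ ω, |M.Y ω| ≤ C) (hpos : M.Positivity)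
    (d : Policy 𝓐 𝓛) (g' : ∀ t : Fin τ, 𝓐 t → Hist 𝓐 𝓛 t → ℝ)
    (m m' : ∀ t : Fin τ, SbarN 𝓐 (t.val + 1) → 𝓐 t → Hist 𝓐 𝓛 t → ℝ)
    (hm : IsSeqReg M d m) (k : Fin τ) :
    (∑ sb : SbarN 𝓐 (k.val + 1), ∫ ω, DD M d (k.val + 1) sb ω * WW M g' (k.val + 1) sb ω *
        (qG M d m' (k.val + 1) sb ω - m' k sb (M.A k ω) (M.Hproc k ω)) ∂M.μ)
      + NN M d g' m m' (k.val + 1)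
    = (∑ sb : SbarN 𝓐 (k.val + 1), ∫ ω, DD M d (k.val + 1) sb ω *
          WW M g' k.val (restrictSb (Nat.le_succ k.val) sb) ω *
          (M.g k (sb ⟨k, Nat.lt_succ_self _⟩) (M.Hproc k ω) / M.g k (M.A k ω) (M.Hproc k ω) -
            g' k (sb ⟨k, Nat.lt_succ_self _⟩) (M.Hproc k ω) /
              g' k (M.A k ω) (M.Hproc k ω)) *
          (m' k sb (M.A k ω) (M.Hproc k ω) - m k sb (M.A k ω) (M.Hproc k ω)) ∂M.μ)
      + NN M d g' m m' k.val := by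
  have hNN1 : NN M d g' m m' (k.val + 1)
      = ∑ sb : SbarN 𝓐 (k.val + 1), ∑ p : 𝓐 k × Hist 𝓐 𝓛 k,
        (cD d k (restrictSb (Nat.le_succ k.val) sb) p.2 *
            (if p.1 = d k sb p.2 then 1 else 0) *
          (cW g' k (restrictSb (Nat.le_succ k.val) sb) p.2 *
            (g' k (sb ⟨k, Nat.lt_succ_self _⟩) p.2 / g' k p.1 p.2))) *
        (m k sb p.1 p.2 * (M.μ (M.condEvent k p.1 p.2)).toReal -
          ∫ ω in M.condEvent k p.1 p.2, qG M d m' (k.val + 1) sb ω ∂M.μ) := by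
    unfold NN
    exact Finset.sum_congr rfl fun sb _ => L2 M hmeas hbdd hpos d g' m m' hm k sb
  rw [Finset.sum_congr rfl fun sb _ => L1 M hmeas hbdd d g' m' k sb, hNN1,
    Finset.sum_congr rfl fun sb _ => L3 M hmeas d g' m m' k sb,
    L4 M hmeas d g' m m' k]
  rw [← Finset.sum_add_distrib]
  calc (∑ sb : SbarN 𝓐 (k.val + 1),
        ((∑ p : 𝓐 k × Hist 𝓐 𝓛 k,
          (cD d k (restrictSb (Nat.le_succ k.val) sb) p.2 *
              (if p.1 = d k sb p.2 then 1 else 0) *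
            (cW g' k (restrictSb (Nat.le_succ k.val) sb) p.2 *
              (g' k (sb ⟨k, Nat.lt_succ_self _⟩) p.2 / g' k p.1 p.2))) *
          ((∫ ω in M.condEvent k p.1 p.2, qG M d m' (k.val + 1) sb ω ∂M.μ) -
            m' k sb p.1 p.2 * (M.μ (M.condEvent k p.1 p.2)).toReal))
        + ∑ p : 𝓐 k × Hist 𝓐 𝓛 k,
          (cD d k (restrictSb (Nat.le_succ k.val) sb) p.2 *
              (if p.1 = d k sb p.2 then 1 else 0) *
            (cW g' k (restrictSb (Nat.le_succ k.val) sb) p.2 *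
              (g' k (sb ⟨k, Nat.lt_succ_self _⟩) p.2 / g' k p.1 p.2))) *
          (m k sb p.1 p.2 * (M.μ (M.condEvent k p.1 p.2)).toReal -
            ∫ ω in M.condEvent k p.1 p.2, qG M d m' (k.val + 1) sb ω ∂M.μ)))
      = ∑ sb : SbarN 𝓐 (k.val + 1), ∑ p : 𝓐 k × Hist 𝓐 𝓛 k,
        (cD d k (restrictSb (Nat.le_succ k.val) sb) p.2 *
            (if p.1 = d k sb p.2 then 1 else 0) *
          (cW g' k (restrictSb (Nat.le_succ k.val) sb) p.2 *
            (g' k (sb ⟨k, Nat.lt_succ_self _⟩) p.2 / g' k p.1 p.2))) *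
        ((m k sb p.1 p.2 - m' k sb p.1 p.2) * (M.μ (M.condEvent k p.1 p.2)).toReal) := by
        refine Finset.sum_congr rfl fun sb _ => ?_
        rw [← Finset.sum_add_distrib]
        refine Finset.sum_congr rfl fun p _ => ?_
        ring
    _ = _ := L5 M hpos d g' m m' k

lemma remProd_eq_WW (M : Model 𝓐 𝓛 Ω) (g' : ∀ t : Fin τ, 𝓐 t → Hist 𝓐 𝓛 t → ℝ)
    (k : Fin τ) (sb : SbarN 𝓐 (k.val + 1)) (ω : Ω) :
    (∏ r : Fin τ, if hr : 0 ≤ r.val ∧ r.val < k.val then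
        g' r (sb ⟨r, Nat.lt_succ_of_lt hr.2⟩) (M.Hproc r ω) /
          g' r (M.A r ω) (M.Hproc r ω)
      else 1)
    = WW M g' k.val (restrictSb (Nat.le_succ k.val) sb) ω := by
  refine Finset.prod_congr rfl fun u _ => ?_
  by_cases h : u.val < k.val
  · rw [dif_pos ⟨Nat.zero_le _, h⟩, dif_pos h]
    exact rfl
  · rw [dif_neg (fun hc => h hc.2), dif_neg h]

end VonMisesAux7
/-- **Exact von Mises expansion of the one-step functional**:
for any nuisance value `η' = (g'_t, m'_t)` with `g'_t > 0`,
`E[φ_1(Z; η')] = θ + Rem_0(η')`, where `θ = E[q_1(A_1, H_1)]` is the true parameter and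
`Rem_0` is the second-order remainder (here expressed via `rem` with conditioning set `univ`,
since for a probability measure `condExpOn μ univ` is the unconditional expectation). -/
theorem exact_von_Mises_expansion_one_step
    [∀ t, Nonempty (𝓐 t)] [∀ t, Fintype (𝓛 t)] [∀ t, Nonempty (𝓛 t)]
    (hτ : 0 < τ)
    (M : Model 𝓐 𝓛 Ω) [IsProbabilityMeasure M.μ]
    (hmeas : M.Meas) (hbdd : ∃ C, ∀ ω, |M.Y ω| ≤ C)
    (hpos : M.Positivity)
    (d : Policy 𝓐 𝓛)
    -- the true sequential regression functions
    (m : ∀ t : Fin τ, SbarN 𝓐 (t.val + 1) → 𝓐 t → Hist 𝓐 𝓛 t → ℝ)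
    (hm : IsSeqReg M d m)
    -- arbitrary nuisance values η' = (g'_t, m'_t)
    (g' : ∀ t : Fin τ, 𝓐 t → Hist 𝓐 𝓛 t → ℝ)
    (hg' : ∀ (t : Fin τ) (a : 𝓐 t) (h : Hist 𝓐 𝓛 t), 0 < g' t a h)
    (m' : ∀ t : Fin τ, SbarN 𝓐 (t.val + 1) → 𝓐 t → Hist 𝓐 𝓛 t → ℝ) :
    (∫ ω, phi M d g' m' 0 (emptySbar 𝓐) ω ∂M.μ) =
      theta hτ M d m + rem M d g' m' m 0 (emptySbar 𝓐) Set.univ := by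
  classical
  -- Step 1: canonical form of the integrand of `phi`
  have hphi : (fun ω => phi M d g' m' 0 (emptySbar 𝓐) ω)
      = fun ω => (∑ k : Fin τ, ∑ sb : SbarN 𝓐 (k.val + 1),
          DD M d (k.val + 1) sb ω * WW M g' (k.val + 1) sb ω *
            (qG M d m' (k.val + 1) sb ω - m' k sb (M.A k ω) (M.Hproc k ω)))
        + qOf d m' ⟨0, hτ⟩ (emptySbar 𝓐) (M.A ⟨0, hτ⟩ ω) (M.Hproc ⟨0, hτ⟩ ω) := by
    funext ω
    unfold phi
    rw [dif_pos hτ]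
    congr 1
    refine Finset.sum_congr rfl fun k _ => ?_
    rw [if_pos (Nat.zero_le _)]
    refine Fintype.sum_equiv (extEquiv k) _ _ fun e => ?_
    rw [mergeExt_empty k e, Dind_eq_DD, weight_eq_WW, qNext_eq_qG]
  -- integrability
  have hTint : ∀ (k : Fin τ) (sb : SbarN 𝓐 (k.val + 1)),
      Integrable (fun ω => DD M d (k.val + 1) sb ω * WW M g' (k.val + 1) sb ω *
        (qG M d m' (k.val + 1) sb ω - m' k sb (M.A k ω) (M.Hproc k ω))) M.μ :=
    fun k sb => integrable_Tterm M hmeas hbdd d g' m' k sb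
  have hq0' : Integrable (fun ω =>
      qOf d m' ⟨0, hτ⟩ (emptySbar 𝓐) (M.A ⟨0, hτ⟩ ω) (M.Hproc ⟨0, hτ⟩ ω)) M.μ :=
    integrable_compPair hmeas ⟨0, hτ⟩ (fun a h => qOf d m' ⟨0, hτ⟩ (emptySbar 𝓐) a h)
  have hq0m : Integrable (fun ω =>
      qOf d m ⟨0, hτ⟩ (emptySbar 𝓐) (M.A ⟨0, hτ⟩ ω) (M.Hproc ⟨0, hτ⟩ ω)) M.μ :=
    integrable_compPair hmeas ⟨0, hτ⟩ (fun a h => qOf d m ⟨0, hτ⟩ (emptySbar 𝓐) a h)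
  have hSk : ∀ k : Fin τ, Integrable (fun ω => ∑ sb : SbarN 𝓐 (k.val + 1),
      DD M d (k.val + 1) sb ω * WW M g' (k.val + 1) sb ω *
        (qG M d m' (k.val + 1) sb ω - m' k sb (M.A k ω) (M.Hproc k ω))) M.μ :=
    fun k => integrable_finset_sum _ fun sb _ => hTint k sb
  have hS : Integrable (fun ω => ∑ k : Fin τ, ∑ sb : SbarN 𝓐 (k.val + 1),
      DD M d (k.val + 1) sb ω * WW M g' (k.val + 1) sb ω *
        (qG M d m' (k.val + 1) sb ω - m' k sb (M.A k ω) (M.Hproc k ω))) M.μ :=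
    integrable_finset_sum _ fun k _ => hSk k
  -- Step 2: split the integral of phi
  rw [hphi, integral_add hS hq0', integral_finset_sum _ fun k _ => hSk k,
    Finset.sum_congr rfl fun k _ => integral_finset_sum _ fun sb _ => hTint k sb]
  -- Step 3: canonical form of the remainder
  have hrem : rem M d g' m' m 0 (emptySbar 𝓐) Set.univ
      = ∑ k : Fin τ, ∑ sb : SbarN 𝓐 (k.val + 1), ∫ ω, DD M d (k.val + 1) sb ω *
          WW M g' k.val (restrictSb (Nat.le_succ k.val) sb) ω *
          (M.g k (sb ⟨k, Nat.lt_succ_self _⟩) (M.Hproc k ω) / M.g k (M.A k ω) (M.Hproc k ω) -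
            g' k (sb ⟨k, Nat.lt_succ_self _⟩) (M.Hproc k ω) /
              g' k (M.A k ω) (M.Hproc k ω)) *
          (m' k sb (M.A k ω) (M.Hproc k ω) - m k sb (M.A k ω) (M.Hproc k ω)) ∂M.μ := by
    unfold rem
    refine Finset.sum_congr rfl fun k _ => ?_
    rw [if_pos (Nat.zero_le _)]
    refine Fintype.sum_equiv (extEquiv k) _ _ fun e => ?_
    rw [condExpOn_univ]
    congr 1
    funext ω
    rw [mergeExt_empty k e, Dind_eq_DD, remProd_eq_WW]
  rw [hrem]
  -- Step 4: telescoping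
  have htel : (∑ k : Fin τ,
      ((∑ sb : SbarN 𝓐 (k.val + 1), ∫ ω, DD M d (k.val + 1) sb ω *
          WW M g' (k.val + 1) sb ω *
          (qG M d m' (k.val + 1) sb ω - m' k sb (M.A k ω) (M.Hproc k ω)) ∂M.μ)
        - (∑ sb : SbarN 𝓐 (k.val + 1), ∫ ω, DD M d (k.val + 1) sb ω *
          WW M g' k.val (restrictSb (Nat.le_succ k.val) sb) ω *
          (M.g k (sb ⟨k, Nat.lt_succ_self _⟩) (M.Hproc k ω) / M.g k (M.A k ω) (M.Hproc k ω) -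
            g' k (sb ⟨k, Nat.lt_succ_self _⟩) (M.Hproc k ω) /
              g' k (M.A k ω) (M.Hproc k ω)) *
          (m' k sb (M.A k ω) (M.Hproc k ω) - m k sb (M.A k ω) (M.Hproc k ω)) ∂M.μ)))
      = NN M d g' m m' 0 - NN M d g' m m' τ := by
    have hstep : ∀ k : Fin τ,
        ((∑ sb : SbarN 𝓐 (k.val + 1), ∫ ω, DD M d (k.val + 1) sb ω *
            WW M g' (k.val + 1) sb ω *
            (qG M d m' (k.val + 1) sb ω - m' k sb (M.A k ω) (M.Hproc k ω)) ∂M.μ)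
          - (∑ sb : SbarN 𝓐 (k.val + 1), ∫ ω, DD M d (k.val + 1) sb ω *
            WW M g' k.val (restrictSb (Nat.le_succ k.val) sb) ω *
            (M.g k (sb ⟨k, Nat.lt_succ_self _⟩) (M.Hproc k ω) /
                M.g k (M.A k ω) (M.Hproc k ω) -
              g' k (sb ⟨k, Nat.lt_succ_self _⟩) (M.Hproc k ω) /
                g' k (M.A k ω) (M.Hproc k ω)) *
            (m' k sb (M.A k ω) (M.Hproc k ω) - m k sb (M.A k ω) (M.Hproc k ω)) ∂M.μ))
        = NN M d g' m m' k.val - NN M d g' m m' (k.val + 1) := by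
      intro k
      have h := step_lemma M hmeas hbdd hpos d g' m m' hm k
      linarith
    rw [Finset.sum_congr rfl fun k _ => hstep k,
      Fin.sum_univ_eq_sum_range (fun i => NN M d g' m m' i - NN M d g' m m' (i + 1)) τ]
    exact Finset.sum_range_sub' (fun i => NN M d g' m m' i) τ
  rw [Finset.sum_sub_distrib, NN_tau M d g' m m', sub_zero] at htel
  have hN0 := NN_zero M d g' hτ m m'
  rw [integral_sub hq0m hq0'] at hN0
  have hth : theta hτ M d m
      = ∫ ω, qOf d m ⟨0, hτ⟩ (emptySbar 𝓐) (M.A ⟨0, hτ⟩ ω) (M.Hproc ⟨0, hτ⟩ ω) ∂M.μ := rfl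
  rw [hth]
  linarith [htel, hN0]

end GLMTP
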